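/- For β ∈ {12★, 1★3, ★23}: if a permutation τ is obtained from a permutation π by repeatedly applying the replacement 123 → β to arbitrarily chosen copies of 123 until the resulting permutation avoids 123, then τ is the primitive permutation of π under 123 ↔ β; in particular, the result does not depend on the choices of copies made, and every permutation equivalent to π has length at least |τ|. -/

import Mathlib

/-!
Pattern-replacement equivalences between permutations of different lengths
(arXiv:1309.4802). A ★-pattern is encoded as a `List (Option ℕ)`, where `none`
is the placeholder ★ and `some k` an integer entry.
-/

/-- A ★-pattern / star-string entry: `none` is ★, `some k` an integer `k`. -/
abbrev SPat := List (Option ℕ)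

/-- The integer entries of a star-string, in order. -/
def ints (ρ : SPat) : List ℕ := ρ.filterMap id

/-- Two lists of naturals are order-isomorphic. -/
def OrdIso (u v : List ℕ) : Prop :=
  u.length = v.length ∧
  ∀ i j, i < u.length → j < u.length → (u.getD i 0 < u.getD j 0 ↔ v.getD i 0 < v.getD j 0)

/-- A valid string of distinct positive integers and ★'s. -/
def StarStr (ρ : SPat) : Prop := (ints ρ).Nodup ∧ ∀ k ∈ ints ρ, 0 < k

/-- `r` (entry by entry) forms a copy of the ★-pattern `δ`: ★'s in the same
positions, and the integer entries order-isomorphic. -/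
def IsCopy (r δ : SPat) : Prop :=
  r.length = δ.length ∧
  (∀ i, (r.getD i none = none ↔ δ.getD i none = none)) ∧
  OrdIso (ints r) (ints δ)

/-- `Repl a b ρ₁ ρ₂` : `ρ₂` is obtained from `ρ₁` by replacing an occurrence of `a`
as a (not necessarily contiguous) substring of `ρ₁` by `b`, entry by entry at the
same positions. -/
inductive Repl : SPat → SPat → SPat → SPat → Prop
  | nil : Repl [] [] [] []
  | keep {a b ρ₁ ρ₂} (x : Option ℕ) : Repl a b ρ₁ ρ₂ → Repl a b (x :: ρ₁) (x :: ρ₂)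
  | repl {a b ρ₁ ρ₂} (x y : Option ℕ) :
      Repl a b ρ₁ ρ₂ → Repl (x :: a) (y :: b) (x :: ρ₁) (y :: ρ₂)

/-- `π` is a permutation of `1, …, n` (as a list). -/
def IsPermList (π : List ℕ) : Prop := π.Perm (List.range' 1 π.length)

/-- `σ` is a result of the replacement `α → β` applied to the permutation `π`:
(1) `ρ₁` is `π` renumbered (order-isomorphically) with ★'s inserted anywhere;
(2) a substring `a` of `ρ₁` forming a copy of `α` is replaced (in place) by a
string `b` that is a copy of `β`, whose integers meet `ρ₁` only inside `a`, and
which agrees with `a` on the integer entries common to `α` and `β`;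
(3) dropping ★'s and renumbering gives the permutation `σ`. -/
def IsResult (α β : SPat) (π σ : List ℕ) : Prop :=
  ∃ ρ₁ ρ₂ a b : SPat,
    StarStr ρ₁ ∧ OrdIso π (ints ρ₁) ∧
    IsCopy a α ∧
    StarStr b ∧ IsCopy b β ∧
    (∀ k ∈ ints b, k ∈ ints ρ₁ → k ∈ ints a) ∧
    (∀ i j x, α.getD i none = some x → β.getD j none = some x →
      a.getD i none = b.getD j none) ∧
    Repl a b ρ₁ ρ₂ ∧
    IsPermList σ ∧ OrdIso (ints ρ₂) σ

/-- Equivalence under the bidirectional replacement `α ↔ β`: a finite sequence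
of `α → β` and `β → α` replacements. -/
def PermEquiv (α β : SPat) (π σ : List ℕ) : Prop :=
  Relation.ReflTransGen (fun τ υ => IsResult α β τ υ ∨ IsResult β α τ υ) π σ

/-- `π` is isolated under `α ↔ β`: no other permutation is equivalent to it. -/
def Isolated (α β : SPat) (π : List ℕ) : Prop :=
  ∀ σ : List ℕ, IsPermList σ → PermEquiv α β π σ → σ = π

/-- The identity permutation `1 2 ⋯ n`. -/
def idPerm (n : ℕ) : List ℕ := List.range' 1 n

/-- The reverse identity permutation `n (n-1) ⋯ 1`. -/
def ridPerm (n : ℕ) : List ℕ := (List.range' 1 n).reverse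

def pat123 : SPat := [some 1, some 2, some 3]
def pat132 : SPat := [some 1, some 3, some 2]
def patS32 : SPat := [none, some 3, some 2]
def pat3S2 : SPat := [some 3, none, some 2]
def pat32S : SPat := [some 3, some 2, none]
def patS31 : SPat := [none, some 3, some 1]
def pat3S1 : SPat := [some 3, none, some 1]
def pat31S : SPat := [some 3, some 1, none]
def patS21 : SPat := [none, some 2, some 1]
def pat2S1 : SPat := [some 2, none, some 1]
def pat21S : SPat := [some 2, some 1, none]
def pat12S : SPat := [some 1, some 2, none]
def pat1S3 : SPat := [some 1, none, some 3]
def patS23 : SPat := [none, some 2, some 3]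
def patS12 : SPat := [none, some 1, some 2]
def pat23S : SPat := [some 2, some 3, none]
def pat13S : SPat := [some 1, some 3, none]
def pat1S2 : SPat := [some 1, none, some 2]

/-- `l` contains a (not necessarily contiguous) copy of the pattern `123`. -/
def contains123 (l : List ℕ) : Prop :=
  ∃ i j k, i < j ∧ j < k ∧ k < l.length ∧
    l.getD i 0 < l.getD j 0 ∧ l.getD j 0 < l.getD k 0

/-- All copies of `123` in `l` (as triples of 0-indexed positions), listed in
lexicographic order: first by position of the smallest element, then of the
middle element, then of the largest element. -/
def triples123 (l : List ℕ) : List (ℕ × ℕ × ℕ) :=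
  (List.range l.length).flatMap fun i =>
    (List.range l.length).flatMap fun j =>
      (List.range l.length).filterMap fun k =>
        if i < j ∧ j < k ∧ l.getD i 0 < l.getD j 0 ∧ l.getD j 0 < l.getD k 0
        then some (i, j, k) else none

/-- The leftmost copy of `123` in `l`, if any. -/
def leftmost123 (l : List ℕ) : Option (ℕ × ℕ × ℕ) := (triples123 l).head?

/-- Repeatedly (with fuel) erase, from the leftmost copy of `123`, the entry at
the position selected by `d`, until no copy of `123` remains. -/
def pIter (d : ℕ × ℕ × ℕ → ℕ) : ℕ → List ℕ → List ℕ
  | 0, l => l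
  | n + 1, l =>
    match leftmost123 l with
    | none => l
    | some t => pIter d n (l.eraseIdx (d t))

/-- Renumber a list of distinct naturals, preserving relative order, into a
permutation of `1, …, n`. -/
def renumber (l : List ℕ) : List ℕ := l.map fun x => (l.filter fun y => y ≤ x).length

def pGamma (d : ℕ × ℕ × ℕ → ℕ) (l : List ℕ) : List ℕ := renumber (pIter d l.length l)

/-- `p_γ` for `γ = 12★`: repeatedly delete the largest element of the leftmost
copy of `123`, then renumber. -/
def p12star (l : List ℕ) : List ℕ := pGamma (fun t => t.2.2) l

/-- `p_γ` for `γ = 1★3`: repeatedly delete the middle element of the leftmost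
copy of `123`, then renumber. -/
def p1star3 (l : List ℕ) : List ℕ := pGamma (fun t => t.2.1) l

/-!
Let `r` be the position of the `★` in `β`, and say that a position of a permutation is
*deletable* if it carries the `r`-th entry of some copy of `123`. A replacement `123 → β`
deletes the entry at a deletable position, and the converse replacement inserts one. Deleting a
deletable entry does not change which of the remaining entries are deletable: a copy of `123`
through the deleted entry can be rerouted through the copy witnessing its deletability. Hence the
pattern formed by the non-deletable entries is an invariant of `123 ↔ β`. A `123`-avoiding `τ`
has no deletable entries, so it is that invariant itself, and every `σ ≡ π` contains it as a
subsequence, properly unless `σ = τ`.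
-/

theorem OrdIso.refl (u : List ℕ) : OrdIso u u := ⟨rfl, fun _ _ _ _ => Iff.rfl⟩

theorem OrdIso.symm {u v : List ℕ} (h : OrdIso u v) : OrdIso v u :=
  ⟨h.1.symm, fun i j hi hj => (h.2 i j (h.1 ▸ hi) (h.1 ▸ hj)).symm⟩

theorem OrdIso.trans {u v w : List ℕ} (h : OrdIso u v) (h' : OrdIso v w) : OrdIso u w :=
  ⟨h.1.trans h'.1, fun i j hi hj => (h.2 i j hi hj).trans (h'.2 i j (h.1 ▸ hi) (h.1 ▸ hj))⟩

theorem OrdIso.le_iff {u v : List ℕ} (h : OrdIso u v) {i j : ℕ} (hi : i < u.length)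
    (hj : j < u.length) : u.getD i 0 ≤ u.getD j 0 ↔ v.getD i 0 ≤ v.getD j 0 := by
  simpa only [not_lt] using (h.2 j i hj hi).not

/-- The ℕ-analogue of `Fin.succAbove`. -/
def Nat.succAbove (m j : ℕ) : ℕ := if j < m then j else j + 1

theorem Nat.succAbove_strictMono (m : ℕ) : StrictMono (Nat.succAbove m) := by
  intro i j h; unfold Nat.succAbove; split_ifs <;> omega

theorem Nat.succAbove_ne (m j : ℕ) : Nat.succAbove m j ≠ m := by
  unfold Nat.succAbove; split_ifs <;> omega

theorem Nat.succAbove_succ_succ (m j : ℕ) :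
    Nat.succAbove (m + 1) (j + 1) = Nat.succAbove m j + 1 := by
  unfold Nat.succAbove; split_ifs <;> omega

theorem Nat.exists_succAbove_eq {m k : ℕ} (h : k ≠ m) : ∃ j, Nat.succAbove m j = k :=
  ⟨if k < m then k else k - 1, by unfold Nat.succAbove; split_ifs <;> omega⟩

theorem List.succAbove_lt_length_iff {α : Type*} {l : List α} {m : ℕ} (hm : m < l.length)
    (k : ℕ) : Nat.succAbove m k < l.length ↔ k < (l.eraseIdx m).length := by
  rw [List.length_eraseIdx_of_lt hm]; unfold Nat.succAbove; split_ifs <;> omega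

theorem List.getD_eraseIdx (l : List ℕ) (m j : ℕ) :
    (l.eraseIdx m).getD j 0 = l.getD (Nat.succAbove m j) 0 := by
  simp only [List.getD_eq_getElem?_getD, List.getElem?_eraseIdx, Nat.succAbove]
  split_ifs <;> rfl

theorem OrdIso.eraseIdx {u v : List ℕ} (h : OrdIso u v) (m : ℕ) :
    OrdIso (u.eraseIdx m) (v.eraseIdx m) := by
  by_cases hm : m < u.length
  · refine ⟨by simp [List.length_eraseIdx_of_lt, hm, ← h.1], fun i j hi hj => ?_⟩
    simp only [List.getD_eraseIdx]
    exact h.2 _ _ ((List.succAbove_lt_length_iff hm i).2 hi)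
      ((List.succAbove_lt_length_iff hm j).2 hj)
  · rw [List.eraseIdx_of_length_le (not_lt.1 hm), List.eraseIdx_of_length_le (h.1 ▸ not_lt.1 hm)]
    exact h

theorem OrdIso.map_getD {u v : List ℕ} (h : OrdIso u v) {I : List ℕ}
    (hI : ∀ i ∈ I, i < u.length) :
    OrdIso (I.map (u.getD · 0)) (I.map (v.getD · 0)) := by
  refine ⟨by simp, fun i j hi hj => ?_⟩
  rw [List.length_map] at hi hj
  simp only [List.getD_eq_getElem?_getD, List.getElem?_map, List.getElem?_eq_getElem hi,
    List.getElem?_eq_getElem hj, Option.map_some, Option.getD_some]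
  exact h.2 _ _ (hI _ (List.getElem_mem hi)) (hI _ (List.getElem_mem hj))

theorem List.map_getD_range (l : List ℕ) : (List.range l.length).map (l.getD · 0) = l :=
  List.ext_getElem (by simp) fun i _ hi => by simp [hi]

theorem List.countP_eq_countP_range_getD (l : List ℕ) (p : ℕ → Bool) :
    l.countP p = (List.range l.length).countP (fun j => p (l.getD j 0)) := by
  conv_lhs => rw [← List.map_getD_range l]
  rw [List.countP_map]; rfl

theorem List.countP_range'_le (n c : ℕ) :
    (List.range' 1 n).countP (· ≤ c) = min c n := by
  induction n with
  | zero => simp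
  | succ n ih =>
    rw [List.range'_concat, List.countP_append, ih]
    by_cases h : 1 + n ≤ c <;> simp [h] <;> omega

theorem IsPermList.getD_eq_countP {w : List ℕ} (hw : IsPermList w) {i : ℕ} (hi : i < w.length) :
    w.getD i 0 = w.countP (· ≤ w.getD i 0) := by
  have hmem : w.getD i 0 ∈ List.range' 1 w.length := hw.subset (by simp [hi])
  rw [List.mem_range'_1] at hmem
  rw [hw.countP_eq, List.countP_range'_le]
  omega

theorem IsPermList.eq_of_ordIso {u v : List ℕ} (hu : IsPermList u) (hv : IsPermList v)
    (h : OrdIso u v) : u = v := by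
  refine List.ext_getElem h.1 fun i hi hi' => ?_
  rw [← List.getD_eq_getElem u 0 hi, ← List.getD_eq_getElem v 0 hi', hu.getD_eq_countP hi,
    hv.getD_eq_countP hi', List.countP_eq_countP_range_getD u,
    List.countP_eq_countP_range_getD v, ← h.1]
  exact List.countP_congr fun j hj => by simpa using h.le_iff (List.mem_range.1 hj) hi

section DropPositions

open Classical in
noncomputable def dropPos {α : Type*} (Q : ℕ → Prop) : List α → List α
  | [] => []
  | x :: xs => if Q 0 then dropPos (fun j => Q (j + 1)) xs else x :: dropPos (fun j => Q (j + 1)) xs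

variable {α : Type*}

theorem dropPos_sublist (Q : ℕ → Prop) (l : List α) : (dropPos Q l).Sublist l := by
  induction l generalizing Q with
  | nil => exact List.Sublist.slnil
  | cons x xs ih =>
    unfold dropPos
    split_ifs
    exacts [(ih _).cons x, (ih _).cons_cons x]

theorem dropPos_of_forall_not {Q : ℕ → Prop} (hQ : ∀ j, ¬ Q j) (l : List α) :
    dropPos Q l = l := by
  induction l generalizing Q with
  | nil => rfl
  | cons x xs ih => rw [dropPos, if_neg (hQ 0), ih fun j => hQ (j + 1)]

theorem dropPos_eraseIdx {Q Q' : ℕ → Prop} {m : ℕ} (hm : Q m)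
    (hQ' : ∀ j, Q' j ↔ Q (Nat.succAbove m j)) (l : List α) :
    dropPos Q' (l.eraseIdx m) = dropPos Q l := by
  induction l generalizing m Q Q' with
  | nil => rfl
  | cons x xs ih =>
    cases m with
    | zero =>
      have : Q' = fun j => Q (j + 1) := funext fun j => propext (hQ' j)
      rw [List.eraseIdx_cons_zero, dropPos, if_pos hm, this]
    | succ m =>
      have h0 : Q' 0 ↔ Q 0 := hQ' 0
      have hrest := ih (Q := fun j => Q (j + 1)) (Q' := fun j => Q' (j + 1)) hm
        fun j => by rw [hQ' (j + 1), Nat.succAbove_succ_succ]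
      rw [List.eraseIdx_cons_succ, dropPos, dropPos, hrest]
      by_cases hQ0 : Q 0
      · rw [if_pos (h0.2 hQ0), if_pos hQ0]
      · rw [if_neg (mt h0.1 hQ0), if_neg hQ0]

theorem dropPos_eq_map_getD (Q : ℕ → Prop) [DecidablePred Q] (l : List ℕ) :
    dropPos Q l = ((List.range l.length).filter (fun i => ¬ Q i)).map (l.getD · 0) := by
  induction l generalizing Q with
  | nil => rfl
  | cons x xs ih =>
    rw [List.length_cons, List.range_succ_eq_map, List.filter_cons, List.filter_map]
    by_cases h : Q 0 <;> simp [dropPos, h, ih, Function.comp_def]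

theorem OrdIso.dropPos {u v : List ℕ} (h : OrdIso u v) (Q : ℕ → Prop) :
    OrdIso (dropPos Q u) (dropPos Q v) := by
  classical
  rw [dropPos_eq_map_getD, dropPos_eq_map_getD, ← h.1]
  exact h.map_getD fun i hi => List.mem_range.1 (List.mem_filter.1 hi).1

end DropPositions

section IncreasingCopies

variable {n : ℕ}

def IsIncCopy (l : List ℕ) (t : Fin n → ℕ) : Prop :=
  StrictMono t ∧ StrictMono (fun i => l.getD (t i) 0) ∧ ∀ i, t i < l.length

def IsRolePos (r : Fin n) (l : List ℕ) (k : ℕ) : Prop :=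
  ∃ t, IsIncCopy l t ∧ t r = k

theorem IsIncCopy.of_ordIso {u v : List ℕ} {t : Fin n → ℕ} (h : OrdIso u v)
    (ht : IsIncCopy u t) : IsIncCopy v t :=
  ⟨ht.1, fun i j hij => (h.2 _ _ (ht.2.2 i) (ht.2.2 j)).1 (ht.2.1 hij),
    fun i => h.1 ▸ ht.2.2 i⟩

theorem isRolePos_congr_ordIso {u v : List ℕ} (r : Fin n) (h : OrdIso u v) :
    IsRolePos r u = IsRolePos r v :=
  funext fun _ => propext ⟨fun ⟨t, ht, hk⟩ => ⟨t, ht.of_ordIso h, hk⟩,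
    fun ⟨t, ht, hk⟩ => ⟨t, ht.of_ordIso h.symm, hk⟩⟩

theorem isIncCopy_eraseIdx_iff {l : List ℕ} {m : ℕ} (hm : m < l.length) {t : Fin n → ℕ} :
    IsIncCopy (l.eraseIdx m) t ↔ IsIncCopy l (Nat.succAbove m ∘ t) := by
  have hmono := Nat.succAbove_strictMono m
  simp only [IsIncCopy, Function.comp_apply, List.getD_eraseIdx,
    ← List.succAbove_lt_length_iff hm]
  exact and_congr_left' ⟨hmono.comp, fun h _ _ hij => hmono.lt_iff_lt.1 (h hij)⟩

theorem IsIncCopy.ite {l : List ℕ} {f g : Fin n → ℕ} (hf : IsIncCopy l f) (hg : IsIncCopy l g)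
    {p : Fin n → Prop} [DecidablePred p] (hp : ∀ ⦃i j⦄, i < j → p j → p i) {m : ℕ}
    (hfm : ∀ i, p i → f i < m ∧ l.getD (f i) 0 < l.getD m 0)
    (hgm : ∀ i, ¬ p i → m < g i ∧ l.getD m 0 < l.getD (g i) 0) :
    IsIncCopy l (fun i => if p i then f i else g i) := by
  refine ⟨hf.1.ite' hg.1 hp fun i j hi hj _ => (hfm i hi).1.trans (hgm j hj).1, ?_,
    fun i => by dsimp only; split_ifs; exacts [hf.2.2 i, hg.2.2 i]⟩
  simp only [apply_ite (l.getD · 0)]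
  exact hf.2.1.ite' hg.2.1 hp fun i j hi hj _ => (hfm i hi).2.trans (hgm j hj).2

/-- If `t` meets `s r` after role `r`, follow `t` up to role `r` and `s` afterwards; if before,
follow `s` before role `r` and `t` from there on. -/
theorem IsIncCopy.exists_avoiding {l : List ℕ} {s t : Fin n → ℕ} (hs : IsIncCopy l s)
    (ht : IsIncCopy l t) {r : Fin n} (hrt : t r ≠ s r) :
    ∃ t', IsIncCopy l t' ∧ t' r = t r ∧ ∀ i, t' i ≠ s r := by
  by_cases hq : ∀ i, t i ≠ s r
  · exact ⟨t, ht, rfl, hq⟩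
  push Not at hq
  obtain ⟨q, hq⟩ := hq
  rcases lt_or_gt_of_ne (show r ≠ q by rintro rfl; exact hrt hq) with hrq | hqr
  · have hfm : ∀ i, i ≤ r → t i < s r ∧ l.getD (t i) 0 < l.getD (s r) 0 := fun i hi =>
      hq ▸ ⟨ht.1 (hi.trans_lt hrq), ht.2.1 (hi.trans_lt hrq)⟩
    have hgm : ∀ i, ¬ i ≤ r → s r < s i ∧ l.getD (s r) 0 < l.getD (s i) 0 := fun i hi =>
      ⟨hs.1 (not_le.1 hi), hs.2.1 (not_le.1 hi)⟩
    refine ⟨_, ht.ite hs (fun i j hij hj => hij.le.trans hj) hfm hgm, if_pos le_rfl,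
      fun i => ?_⟩
    split_ifs with h; exacts [(hfm i h).1.ne, (hgm i h).1.ne']
  · have hfm : ∀ i, i < r → s i < s r ∧ l.getD (s i) 0 < l.getD (s r) 0 := fun i hi =>
      ⟨hs.1 hi, hs.2.1 hi⟩
    have hgm : ∀ i, ¬ i < r → s r < t i ∧ l.getD (s r) 0 < l.getD (t i) 0 := fun i hi =>
      hq ▸ ⟨ht.1 (hqr.trans_le (not_lt.1 hi)), ht.2.1 (hqr.trans_le (not_lt.1 hi))⟩
    refine ⟨_, hs.ite ht (fun i j hij hj => hij.trans hj) hfm hgm, if_neg (lt_irrefl r),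
      fun i => ?_⟩
    split_ifs with h; exacts [(hfm i h).1.ne, (hgm i h).1.ne']

theorem isRolePos_eraseIdx_iff {l : List ℕ} {r : Fin n} {m : ℕ} (hm : IsRolePos r l m)
    (j : ℕ) :
    IsRolePos r (l.eraseIdx m) j ↔ IsRolePos r l (Nat.succAbove m j) := by
  obtain ⟨s, hs, rfl⟩ := hm
  have hlen := hs.2.2 r
  constructor
  · rintro ⟨t, ht, rfl⟩
    exact ⟨_, (isIncCopy_eraseIdx_iff hlen).1 ht, rfl⟩
  · rintro ⟨t, ht, htr⟩
    obtain ⟨t', ht', ht'r, havoid⟩ := hs.exists_avoiding ht (htr ▸ Nat.succAbove_ne _ _)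
    choose t₀ ht₀ using fun i => Nat.exists_succAbove_eq (havoid i)
    have ht'_eq : t' = Nat.succAbove (s r) ∘ t₀ := funext fun i => (ht₀ i).symm
    refine ⟨t₀, (isIncCopy_eraseIdx_iff hlen).2 (ht'_eq ▸ ht'), ?_⟩
    exact (Nat.succAbove_strictMono _).injective (by rw [ht₀ r, ht'r, htr])

theorem IsIncCopy.contains123 {l : List ℕ} {t : Fin 3 → ℕ} (h : IsIncCopy l t) :
    contains123 l :=
  ⟨t 0, t 1, t 2, h.1 (by decide), h.1 (by decide), h.2.2 2, h.2.1 (by decide),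
    h.2.1 (by decide)⟩

theorem isIncCopy_append_three {x y z : ℕ} (hxy : x < y) (hyz : y < z) (s t u w : List ℕ) :
    IsIncCopy (s ++ x :: t ++ y :: u ++ z :: w)
      ![s.length, (s ++ x :: t).length, (s ++ x :: t ++ y :: u).length] := by
  refine ⟨?_, ?_, ?_⟩ <;>
    simp [Fin.strictMono_iff_lt_succ, Fin.forall_fin_succ, List.getD_eq_getElem?_getD,
      List.getElem?_append, hxy, hyz]

noncomputable def dropRolePos (r : Fin n) (l : List ℕ) : List ℕ := dropPos (IsRolePos r l) l

theorem dropRolePos_eraseIdx {r : Fin n} {l : List ℕ} {m : ℕ} (hm : IsRolePos r l m) :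
    dropRolePos r (l.eraseIdx m) = dropRolePos r l :=
  dropPos_eraseIdx hm (isRolePos_eraseIdx_iff hm) l

theorem OrdIso.dropRolePos {u v : List ℕ} (h : OrdIso u v) (r : Fin n) :
    OrdIso (dropRolePos r u) (dropRolePos r v) := by
  unfold _root_.dropRolePos
  rw [isRolePos_congr_ordIso r h]
  exact h.dropPos _

end IncreasingCopies

@[simp] theorem ints_cons_some (x : ℕ) (ρ : SPat) : ints (some x :: ρ) = x :: ints ρ := rfl

@[simp] theorem ints_cons_none (ρ : SPat) : ints (none :: ρ) = ints ρ := rfl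

@[simp] theorem ints_append (ρ ρ' : SPat) : ints (ρ ++ ρ') = ints ρ ++ ints ρ' :=
  List.filterMap_append

theorem Repl.symm {a b ρ₁ ρ₂ : SPat} (h : Repl a b ρ₁ ρ₂) : Repl b a ρ₂ ρ₁ := by
  induction h with
  | nil => exact Repl.nil
  | keep x _ ih => exact Repl.keep x ih
  | repl x y _ ih => exact Repl.repl y x ih

theorem Repl.eq_of_nil {b ρ₁ ρ₂ : SPat} (h : Repl [] b ρ₁ ρ₂) : ρ₁ = ρ₂ := by
  generalize ha : ([] : SPat) = a at h
  induction h with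
  | nil => rfl
  | keep x _ ih => rw [ih ha]
  | repl => simp at ha

theorem Repl.exists_of_cons {x y : Option ℕ} {a b ρ₁ ρ₂ : SPat}
    (h : Repl (x :: a) (y :: b) ρ₁ ρ₂) :
    ∃ c ρ₁' ρ₂', ρ₁ = c ++ x :: ρ₁' ∧ ρ₂ = c ++ y :: ρ₂' ∧ Repl a b ρ₁' ρ₂' := by
  generalize ha : x :: a = a' at h
  generalize hb : y :: b = b' at h
  induction h with
  | nil => simp at ha
  | keep z _ ih =>
    obtain ⟨c, ρ₁', ρ₂', rfl, rfl, h⟩ := ih ha hb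
    exact ⟨z :: c, ρ₁', ρ₂', rfl, rfl, h⟩
  | repl _ _ h =>
    obtain ⟨rfl, rfl⟩ := List.cons.inj ha
    obtain ⟨rfl, rfl⟩ := List.cons.inj hb
    exact ⟨[], _, _, rfl, rfl, h⟩

theorem Repl.exists_of_three {a₀ a₁ a₂ b₀ b₁ b₂ : Option ℕ} {ρ₁ ρ₂ : SPat}
    (h : Repl [a₀, a₁, a₂] [b₀, b₁, b₂] ρ₁ ρ₂) :
    ∃ c₀ c₁ c₂ c₃ : SPat, ρ₁ = c₀ ++ a₀ :: c₁ ++ a₁ :: c₂ ++ a₂ :: c₃ ∧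
      ρ₂ = c₀ ++ b₀ :: c₁ ++ b₁ :: c₂ ++ b₂ :: c₃ := by
  obtain ⟨c₀, _, _, rfl, rfl, h₁⟩ := h.exists_of_cons
  obtain ⟨c₁, _, _, rfl, rfl, h₂⟩ := h₁.exists_of_cons
  obtain ⟨c₂, c₃, _, rfl, rfl, h₃⟩ := h₂.exists_of_cons
  exact ⟨c₀, c₁, c₂, c₃, by simp, by simp [h₃.eq_of_nil]⟩

theorem Repl.exists_isRolePos {x y z : ℕ} (hxy : x < y) (hyz : y < z) (r : Fin 3)
    {ρ₁ ρ₂ : SPat}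
    (h : Repl [some x, some y, some z] ([some x, some y, some z].set r none) ρ₁ ρ₂) :
    ∃ k, IsRolePos r (ints ρ₁) k ∧ ints ρ₂ = (ints ρ₁).eraseIdx k := by
  fin_cases r <;>
  · obtain ⟨c₀, c₁, c₂, c₃, rfl, rfl⟩ := Repl.exists_of_three h
    simp only [ints_append, ints_cons_some, ints_cons_none]
    refine ⟨_, ⟨_, isIncCopy_append_three hxy hyz _ _ _ _, rfl⟩, ?_⟩
    simp [List.eraseIdx_append_of_length_le]

theorem IsCopy.exists_eq_of_pat123 {a : SPat} (h : IsCopy a pat123) :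
    ∃ x y z, a = [some x, some y, some z] ∧ x < y ∧ y < z := by
  obtain ⟨hlen, hstar, hiso⟩ := h
  obtain ⟨a₀, a₁, a₂, rfl⟩ := List.length_eq_three.mp hlen
  have h₀ := hstar 0
  have h₁ := hstar 1
  have h₂ := hstar 2
  simp only [pat123, List.getD_cons_zero, List.getD_cons_succ, reduceCtorEq, iff_false]
    at h₀ h₁ h₂
  obtain ⟨x, rfl⟩ := Option.ne_none_iff_exists'.1 h₀
  obtain ⟨y, rfl⟩ := Option.ne_none_iff_exists'.1 h₁
  obtain ⟨z, rfl⟩ := Option.ne_none_iff_exists'.1 h₂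
  have hxy := hiso.2 0 1 (by simp [ints]) (by simp [ints])
  have hyz := hiso.2 1 2 (by simp [ints]) (by simp [ints])
  simp [ints, pat123] at hxy hyz
  exact ⟨x, y, z, rfl, hxy, hyz⟩

theorem List.eq_set_none {a b : SPat} {r : ℕ} (hlen : b.length = a.length)
    (hr : b.getD r none = none) (h : ∀ i, i ≠ r → a.getD i none = b.getD i none) :
    b = a.set r none := by
  refine List.ext_getElem (by simp [hlen]) fun i hb ha => ?_
  by_cases hir : i = r
  · subst hir
    simpa [hb] using hr
  · rw [List.length_set] at ha
    simpa [List.getElem_set_ne (Ne.symm hir), ha, hb] using (h i hir).symm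

theorem IsCopy.eq_set_none_of_agree {r : Fin 3} {a b : SPat} (ha : IsCopy a pat123)
    (hb : IsCopy b (pat123.set r none))
    (hagr : ∀ i, i ≠ r.val → i < 3 → a.getD i none = b.getD i none) :
    b = a.set r none := by
  refine List.eq_set_none (hb.1.trans (ha.1.trans (by fin_cases r <;> rfl)).symm)
    ((hb.2.1 r).2 (by fin_cases r <;> rfl)) fun i hir => ?_
  by_cases hi : i < 3
  · exact hagr i hir hi
  · have hbl : b.length = 3 := by rw [hb.1]; fin_cases r <;> rfl
    have hal : a.length = 3 := ha.1
    simp [List.getD_eq_getElem?_getD, hbl, hal, not_lt.1 hi]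

theorem getD_pat123_set {r : Fin 3} {i : ℕ} (hi : i < 3) (hir : i ≠ r.val) :
    pat123.getD i none = some (i + 1) ∧ (pat123.set r none).getD i none = some (i + 1) := by
  interval_cases i <;> fin_cases r <;> simp_all [pat123]

theorem IsResult.exists_isRolePos_of_pat123 {r : Fin 3} {σ τ : List ℕ}
    (h : IsResult pat123 (pat123.set r none) σ τ) :
    ∃ k, IsRolePos r σ k ∧ OrdIso (σ.eraseIdx k) τ := by
  obtain ⟨ρ₁, ρ₂, a, b, -, hσ, ha, -, hb, -, hagr, hrepl, -, hτ⟩ := h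
  have hab := ha.eq_set_none_of_agree hb fun i hir hi =>
    hagr i i (i + 1) (getD_pat123_set hi hir).1 (getD_pat123_set hi hir).2
  obtain ⟨x, y, z, rfl, hxy, hyz⟩ := ha.exists_eq_of_pat123
  subst hab
  obtain ⟨k, hk, he⟩ := hrepl.exists_isRolePos hxy hyz r
  exact ⟨k, isRolePos_congr_ordIso r hσ ▸ hk, (hσ.eraseIdx k).trans (he ▸ hτ)⟩

theorem IsResult.exists_isRolePos_to_pat123 {r : Fin 3} {σ τ : List ℕ}
    (h : IsResult (pat123.set r none) pat123 σ τ) :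
    ∃ k, IsRolePos r τ k ∧ OrdIso (τ.eraseIdx k) σ := by
  obtain ⟨ρ₁, ρ₂, a, b, -, hσ, ha, -, hb, -, hagr, hrepl, -, hτ⟩ := h
  have hab := hb.eq_set_none_of_agree ha fun i hir hi =>
    (hagr i i (i + 1) (getD_pat123_set hi hir).2 (getD_pat123_set hi hir).1).symm
  obtain ⟨x, y, z, rfl, hxy, hyz⟩ := hb.exists_eq_of_pat123
  subst hab
  obtain ⟨k, hk, he⟩ := hrepl.symm.exists_isRolePos hxy hyz r
  exact ⟨k, isRolePos_congr_ordIso r hτ ▸ hk, (hτ.symm.eraseIdx k).trans (he ▸ hσ.symm)⟩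

theorem IsResult.isPermList {α β : SPat} {σ τ : List ℕ} (h : IsResult α β σ τ) :
    IsPermList τ := by
  obtain ⟨-, -, -, -, -, -, -, -, -, -, -, -, hτ, -⟩ := h
  exact hτ

theorem PermEquiv.ordIso_dropRolePos {r : Fin 3} {π σ : List ℕ}
    (h : PermEquiv pat123 (pat123.set r none) π σ) :
    OrdIso (dropRolePos r π) (dropRolePos r σ) := by
  induction h with
  | refl => exact .refl _
  | tail _ hstep ih =>
    rcases hstep with hstep | hstep
    · obtain ⟨k, hk, hiso⟩ := hstep.exists_isRolePos_of_pat123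
      exact ih.trans (dropRolePos_eraseIdx hk ▸ hiso.dropRolePos r)
    · obtain ⟨k, hk, hiso⟩ := hstep.exists_isRolePos_to_pat123
      exact ih.trans (dropRolePos_eraseIdx hk ▸ hiso.dropRolePos r).symm

theorem primitive_of_reflTransGen (r : Fin 3) {π τ : List ℕ} (hπ : IsPermList π)
    (hτ : Relation.ReflTransGen (IsResult pat123 (pat123.set r none)) π τ)
    (hav : ¬ contains123 τ) :
    PermEquiv pat123 (pat123.set r none) π τ ∧
      ∀ σ : List ℕ, IsPermList σ → PermEquiv pat123 (pat123.set r none) π σ →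
        τ.length ≤ σ.length ∧ (σ.length = τ.length → σ = τ) := by
  have hequiv : PermEquiv pat123 (pat123.set r none) π τ :=
    Relation.ReflTransGen.mono (fun _ _ => Or.inl) _ _ hτ
  have hτperm : IsPermList τ := by
    induction hτ with
    | refl => exact hπ
    | tail _ hstep _ => exact hstep.isPermList
  have hdropτ : dropRolePos r τ = τ :=
    dropPos_of_forall_not (fun _ ⟨_, ht, _⟩ => hav ht.contains123) τ
  refine ⟨hequiv, fun σ hσ hπσ => ?_⟩
  have hiso : OrdIso (dropRolePos r σ) τ :=
    hdropτ ▸ hπσ.ordIso_dropRolePos.symm.trans hequiv.ordIso_dropRolePos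
  have hsub := dropPos_sublist (IsRolePos r σ) σ
  refine ⟨hiso.1 ▸ hsub.length_le, fun hlen => ?_⟩
  have hdropσ : dropRolePos r σ = σ := hsub.eq_of_length (hiso.1.trans hlen.symm)
  exact hσ.eq_of_ordIso hτperm (hdropσ ▸ hiso)

/-- for `β ∈ {12★, 1★3, ★23}`, if `τ` is obtained from `π` by
repeatedly applying `123 → β` to arbitrarily chosen copies of `123` until the
result avoids `123`, then `τ` is the primitive permutation of `π` under
`123 ↔ β`: `π ≡ τ`, every permutation equivalent to `π` has length at least
`|τ|`, and the only equivalent permutation of that length is `τ` itself (so the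
result does not depend on the choices made). -/
theorem dropOnly_primitive :
    ∀ β ∈ ([pat12S, pat1S3, patS23] : List SPat),
    ∀ π τ : List ℕ, IsPermList π →
    Relation.ReflTransGen (IsResult pat123 β) π τ → ¬ contains123 τ →
    PermEquiv pat123 β π τ ∧
      ∀ σ : List ℕ, IsPermList σ → PermEquiv pat123 β π σ →
        τ.length ≤ σ.length ∧ (σ.length = τ.length → σ = τ) := by
  intro β hβ π τ hπ hτ hav
  obtain ⟨r, rfl⟩ : ∃ r : Fin 3, β = pat123.set r none := by
    simp only [List.mem_cons, List.not_mem_nil, or_false] at hβ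
    rcases hβ with rfl | rfl | rfl
    exacts [⟨2, rfl⟩, ⟨1, rfl⟩, ⟨0, rfl⟩]
  exact primitive_of_reflTransGen r hπ hτ hav
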